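/- Let X be a simplicial set satisfying Kan(m,j) for all m ≥ 1 and 0 ≤ j ≤ m, and Kan!(m,j) for all m ≥ 3 and 0 ≤ j ≤ m (a 2-groupoid). For every η ∈ X₂ with d₂η degenerate (d₂η = s₀(v) for some v ∈ X₀), there exists a unique η' ∈ X₂ for which there is a 3-simplex θ ∈ X₃ with d₃θ = η, d₂θ = s₀(d₁η), d₁θ = s₁(d₁η) and d₀θ = η'. This η' satisfies d₂η' = d₀η, d₁η' = d₁η and d₀η' = s₀(d₀(d₁η)) (so its d₀-face is degenerate), and the assignment η ↦ η' is a bijection from {η ∈ X₂ : d₂η is degenerate} onto {η' ∈ X₂ : d₀η' is degenerate}. -/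

import Mathlib

open CategoryTheory Simplicial

/-- `Kan(m,j)`: every map from the horn `Λ[m,j]` to `X` extends along the horn
inclusion to a map `Δ[m] ⟶ X`. -/
def SSet.KanCond (X : SSet.{u}) (m : ℕ) (j : Fin (m + 1)) : Prop :=
  ∀ σ₀ : (Λ[m, j] : SSet) ⟶ X, ∃ σ : Δ[m] ⟶ X, σ₀ = Λ[m, j].ι ≫ σ

/-- `Kan!(m,j)`: every map from the horn `Λ[m,j]` to `X` extends *uniquely* along the
horn inclusion to a map `Δ[m] ⟶ X`. -/
def SSet.KanCondUnique (X : SSet.{u}) (m : ℕ) (j : Fin (m + 1)) : Prop :=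
  ∀ σ₀ : (Λ[m, j] : SSet) ⟶ X, ∃! σ : Δ[m] ⟶ X, σ₀ = Λ[m, j].ι ≫ σ

/-- The relation `R η η'`: there is a 3-simplex `θ` with `d₃ θ = η`,
`d₂ θ = s₀ (d₁ η)`, `d₁ θ = s₁ (d₁ η)` and `d₀ θ = η'`. -/
def SSet.FlipRel (X : SSet.{u}) (η η' : X _⦋2⦌) : Prop :=
  ∃ θ : X _⦋3⦌, X.δ 3 θ = η ∧ X.δ 2 θ = X.σ 0 (X.δ 1 η) ∧
    X.δ 1 θ = X.σ 1 (X.δ 1 η) ∧ X.δ 0 θ = η'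

/-! Both directions are horn filling in dimension 3. If `d₂ η` is degenerate, the 2-simplices
`s₁ (d₁ η)`, `s₀ (d₁ η)`, `η` are compatible faces of a `Λ[3, 0]`-horn, and a filler `θ` gives
`η' = d₀ θ`; dually, if `d₀ η'` is degenerate, `η'`, `s₁ (d₁ η')`, `s₀ (d₁ η')` form a
`Λ[3, 3]`-horn whose filler gives `η = d₃ θ`. Unique filling of these horns makes `FlipRel`
left and right unique, and the simplicial identities applied to `θ` compute the faces of `η'`
and show that `d₂ η` is degenerate as soon as `η` is related to anything. -/

namespace SSet

variable {X : SSet.{u}}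

lemma KanCondUnique.kanCond {m : ℕ} {j : Fin (m + 1)} (hX : X.KanCondUnique m j) :
    X.KanCond m j :=
  fun σ₀ ↦ (hX σ₀).exists

lemma isCompatible_yonedaEquiv_symm_iff {n : ℕ} {i : Fin (n + 3)}
    (x : ∀ j, j ≠ i → X _⦋n + 1⦌) :
    horn.IsCompatible (fun j hj ↦ yonedaEquiv.symm (x j hj)) ↔
      ∀ j k (hj : j ≠ i) (hk : k ≠ i) (hjk : j < k),
        X.δ (k.pred (Fin.ne_zero_of_lt hjk)) (x j hj) =
          X.δ (j.castPred (Fin.ne_last_of_lt hjk)) (x k hk) := by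
  simp only [horn.isCompatible_iff, stdSimplex.δ_comp_yonedaEquiv_symm,
    Equiv.apply_eq_iff_eq]

lemma KanCond.exists_δ_eq {n : ℕ} {i : Fin (n + 2)} (hX : X.KanCond (n + 1) i)
    {x : ∀ j, j ≠ i → X _⦋n⦌} (hx : horn.IsCompatible fun j hj ↦ yonedaEquiv.symm (x j hj)) :
    ∃ θ : X _⦋n + 1⦌, ∀ j hj, X.δ j θ = x j hj := by
  obtain ⟨σ, hσ⟩ := hX hx.desc
  refine ⟨yonedaEquiv σ, fun j hj ↦ ?_⟩
  rw [← stdSimplex.yonedaEquiv_δ_comp, ← horn.ι_ι i j hj, Category.assoc, ← hσ, hx.ι_desc,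
    Equiv.apply_symm_apply]

lemma KanCondUnique.eq_of_δ_eq {n : ℕ} {i : Fin (n + 2)} (hX : X.KanCondUnique (n + 1) i)
    {θ θ' : X _⦋n + 1⦌} (h : ∀ j, j ≠ i → X.δ j θ = X.δ j θ') : θ = θ' := by
  have hhorn : Λ[n + 1, i].ι ≫ yonedaEquiv.symm θ = Λ[n + 1, i].ι ≫ yonedaEquiv.symm θ' :=
    horn.hom_ext' fun j hj ↦ by
      simp only [horn.ι_ι_assoc, stdSimplex.δ_comp_yonedaEquiv_symm, h j hj]
  exact yonedaEquiv.symm.injective ((hX _).unique rfl hhorn)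

lemma KanCond.exists_three_zero (hX : X.KanCond 3 0) {x₁ x₂ x₃ : X _⦋2⦌}
    (h₁₂ : X.δ 1 x₁ = X.δ 1 x₂) (h₁₃ : X.δ 2 x₁ = X.δ 1 x₃) (h₂₃ : X.δ 2 x₂ = X.δ 2 x₃) :
    ∃ θ : X _⦋3⦌, X.δ 1 θ = x₁ ∧ X.δ 2 θ = x₂ ∧ X.δ 3 θ = x₃ := by
  have hx : horn.IsCompatible fun (j : Fin 4) (_ : j ≠ 0) ↦
      yonedaEquiv.symm (![x₃, x₁, x₂, x₃] j) := by
    rw [isCompatible_yonedaEquiv_symm_iff]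
    intro j k hj hk hjk
    fin_cases j <;> fin_cases k <;>
      first | assumption | simp at hj hk hjk
  obtain ⟨θ, hθ⟩ := hX.exists_δ_eq hx
  exact ⟨θ, hθ 1 (by decide), hθ 2 (by decide), hθ 3 (by decide)⟩

lemma KanCond.exists_three_three (hX : X.KanCond 3 3) {x₀ x₁ x₂ : X _⦋2⦌}
    (h₀₁ : X.δ 0 x₀ = X.δ 0 x₁) (h₀₂ : X.δ 1 x₀ = X.δ 0 x₂) (h₁₂ : X.δ 1 x₁ = X.δ 1 x₂) :
    ∃ θ : X _⦋3⦌, X.δ 0 θ = x₀ ∧ X.δ 1 θ = x₁ ∧ X.δ 2 θ = x₂ := by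
  have hx : horn.IsCompatible fun (j : Fin 4) (_ : j ≠ 3) ↦
      yonedaEquiv.symm (![x₀, x₁, x₂, x₀] j) := by
    rw [isCompatible_yonedaEquiv_symm_iff]
    intro j k hj hk hjk
    fin_cases j <;> fin_cases k <;>
      first | assumption | simp at hj hk hjk
  obtain ⟨θ, hθ⟩ := hX.exists_δ_eq hx
  exact ⟨θ, hθ 0 (by decide), hθ 1 (by decide), hθ 2 (by decide)⟩

namespace FlipRel

variable {η η' : X _⦋2⦌}

lemma δ_two_left (h : X.FlipRel η η') : X.δ 2 η = X.σ 0 (X.δ 1 (X.δ 1 η)) := by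
  obtain ⟨θ, h₃, h₂, -, -⟩ := h
  calc X.δ 2 η = X.δ 2 (X.δ 2 θ) := by
        rw [← h₃]; exact δ_comp_δ_apply (i := 2) (j := 2) le_rfl θ
    _ = X.σ 0 (X.δ 1 (X.δ 1 η)) := by
        rw [h₂]; exact δ_comp_σ_of_gt_apply (i := 1) (j := 0) (by decide) _

lemma δ_two (h : X.FlipRel η η') : X.δ 2 η' = X.δ 0 η := by
  obtain ⟨θ, h₃, -, -, h₀⟩ := h
  rw [← h₀, ← h₃]
  exact (δ_comp_δ_apply (i := 0) (j := 2) (by decide) θ).symm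

lemma δ_one (h : X.FlipRel η η') : X.δ 1 η' = X.δ 1 η := by
  obtain ⟨θ, -, h₂, -, h₀⟩ := h
  calc X.δ 1 η' = X.δ 0 (X.δ 2 θ) := by
        rw [← h₀]; exact (δ_comp_δ_apply (i := 0) (j := 1) (by decide) θ).symm
    _ = X.δ 1 η := by rw [h₂]; exact δ_comp_σ_self_apply 0 _

lemma δ_zero (h : X.FlipRel η η') : X.δ 0 η' = X.σ 0 (X.δ 0 (X.δ 1 η)) := by
  obtain ⟨θ, -, -, h₁, h₀⟩ := h
  calc X.δ 0 η' = X.δ 0 (X.δ 1 θ) := by rw [← h₀]; exact δ_comp_δ_self_apply (i := 0) θ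
    _ = X.σ 0 (X.δ 0 (X.δ 1 η)) := by
        rw [h₁]; exact δ_comp_σ_of_le_apply (i := 0) (j := 0) le_rfl _

end FlipRel

lemma exists_flipRel_of_δ_two_eq_σ (hX : X.KanCond 3 0) {η : X _⦋2⦌}
    (hη : ∃ v, X.δ 2 η = X.σ 0 v) : ∃ η', X.FlipRel η η' := by
  obtain ⟨v, hv⟩ := hη
  have hv' : v = X.δ 1 (X.δ 1 η) := by
    rw [← δ_comp_σ_succ_apply 0 v, ← hv]
    exact δ_comp_δ_apply (i := 1) (j := 1) le_rfl η
  obtain ⟨θ, h₁, h₂, h₃⟩ := hX.exists_three_zero (x₁ := X.σ 1 (X.δ 1 η))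
    (x₂ := X.σ 0 (X.δ 1 η)) (x₃ := η)
    ((δ_comp_σ_self_apply 1 _).trans (δ_comp_σ_succ_apply 0 _).symm)
    (δ_comp_σ_succ_apply 1 _)
    (by rw [hv, hv']; exact δ_comp_σ_of_gt_apply (i := 1) (j := 0) (by decide) _)
  exact ⟨X.δ 0 θ, θ, h₃, h₂, h₁, rfl⟩

lemma exists_flipRel_of_δ_zero_eq_σ (hX : X.KanCond 3 3) {η' : X _⦋2⦌}
    (hη' : ∃ v, X.δ 0 η' = X.σ 0 v) : ∃ η, X.FlipRel η η' := by
  obtain ⟨v, hv⟩ := hη'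
  have hv' : v = X.δ 0 (X.δ 1 η') := by
    rw [← δ_comp_σ_self_apply 0 v, ← hv]
    exact δ_comp_δ_self_apply (i := 0) η'
  obtain ⟨θ, h₀, h₁, h₂⟩ := hX.exists_three_three (x₀ := η')
    (x₁ := X.σ 1 (X.δ 1 η')) (x₂ := X.σ 0 (X.δ 1 η'))
    (by rw [hv, hv']; exact (δ_comp_σ_of_le_apply (i := 0) (j := 0) le_rfl _).symm)
    (δ_comp_σ_self_apply 0 _).symm
    ((δ_comp_σ_self_apply 1 _).trans (δ_comp_σ_succ_apply 0 _).symm)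
  have hd : X.δ 1 (X.δ 3 θ) = X.δ 1 η' :=
    calc X.δ 1 (X.δ 3 θ) = X.δ 2 (X.δ 1 θ) := δ_comp_δ_apply (i := 1) (j := 2) (by decide) θ
      _ = X.δ 1 η' := by rw [h₁]; exact δ_comp_σ_succ_apply 1 _
  exact ⟨X.δ 3 θ, θ, rfl, by rw [hd, h₂], by rw [hd, h₁], h₀⟩

lemma flipRel_rightUnique (hX : X.KanCondUnique 3 0) : Relator.RightUnique X.FlipRel := by
  rintro η η₁ η₂ ⟨θ₁, h₃, h₂, h₁, rfl⟩ ⟨θ₂, h₃', h₂', h₁', rfl⟩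
  congr 1
  refine hX.eq_of_δ_eq fun j hj ↦ ?_
  fin_cases j
  · exact absurd rfl hj
  · exact h₁.trans h₁'.symm
  · exact h₂.trans h₂'.symm
  · exact h₃.trans h₃'.symm

lemma flipRel_leftUnique (hX : X.KanCondUnique 3 3) : Relator.LeftUnique X.FlipRel := by
  intro η₁ η₂ η' hη₁ hη₂
  have he : X.δ 1 η₁ = X.δ 1 η₂ := hη₁.δ_one.symm.trans hη₂.δ_one
  obtain ⟨θ₁, h₃, h₂, h₁, h₀⟩ := hη₁
  obtain ⟨θ₂, h₃', h₂', h₁', h₀'⟩ := hη₂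
  rw [← h₃, ← h₃']
  congr 1
  refine hX.eq_of_δ_eq fun j hj ↦ ?_
  fin_cases j
  · exact h₀.trans h₀'.symm
  · exact h₁.trans ((congrArg (X.σ 1) he).trans h₁'.symm)
  · exact h₂.trans ((congrArg (X.σ 0) he).trans h₂'.symm)
  · exact absurd rfl hj

end SSet

theorem bigon_flip_bijection_general (X : SSet.{u})
    (h₂ : ∀ (m : ℕ), 3 ≤ m → ∀ j : Fin (m + 1), X.KanCondUnique m j) :
    (∀ η : X _⦋2⦌, (∃ v : X _⦋0⦌, X.δ 2 η = X.σ 0 v) →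
      (∃! η' : X _⦋2⦌, X.FlipRel η η') ∧
      (∀ η' : X _⦋2⦌, X.FlipRel η η' →
        X.δ 2 η' = X.δ 0 η ∧ X.δ 1 η' = X.δ 1 η ∧
        X.δ 0 η' = X.σ 0 (X.δ 0 (X.δ 1 η)))) ∧
    (∀ η' : X _⦋2⦌, (∃ v : X _⦋0⦌, X.δ 0 η' = X.σ 0 v) →
      ∃! η : X _⦋2⦌, (∃ v : X _⦋0⦌, X.δ 2 η = X.σ 0 v) ∧ X.FlipRel η η') := by
  have hX₀ : X.KanCondUnique 3 0 := h₂ 3 le_rfl 0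
  have hX₃ : X.KanCondUnique 3 3 := h₂ 3 le_rfl 3
  refine ⟨fun η hη ↦ ⟨?_, fun η' h ↦ ⟨h.δ_two, h.δ_one, h.δ_zero⟩⟩, fun η' hη' ↦ ?_⟩
  · obtain ⟨η', h⟩ := SSet.exists_flipRel_of_δ_two_eq_σ hX₀.kanCond hη
    exact ⟨η', h, fun η'' h' ↦ SSet.flipRel_rightUnique hX₀ h' h⟩
  · obtain ⟨η, h⟩ := SSet.exists_flipRel_of_δ_zero_eq_σ hX₃.kanCond hη'
    exact ⟨η, ⟨⟨_, h.δ_two_left⟩, h⟩, fun η'' h' ↦ SSet.flipRel_leftUnique hX₃ h'.2 h⟩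

/-- In a 2-groupoid `X`, every 2-simplex `η` with degenerate `d₂`-face has a unique
partner `η'` related to it by a 3-simplex as in `SSet.FlipRel`; this `η'` has
`d₂ η' = d₀ η`, `d₁ η' = d₁ η` and degenerate `d₀`-face
`d₀ η' = s₀ (d₀ (d₁ η))`, and the assignment `η ↦ η'` is a bijection from the set of
2-simplices with degenerate `d₂`-face onto the set of 2-simplices with degenerate
`d₀`-face. -/
theorem bigon_flip_bijection (X : SSet.{u})
    (h₁ : ∀ (m : ℕ), 1 ≤ m → ∀ j : Fin (m + 1), X.KanCond m j)
    (h₂ : ∀ (m : ℕ), 3 ≤ m → ∀ j : Fin (m + 1), X.KanCondUnique m j) :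
    (∀ η : X _⦋2⦌, (∃ v : X _⦋0⦌, X.δ 2 η = X.σ 0 v) →
      (∃! η' : X _⦋2⦌, X.FlipRel η η') ∧
      (∀ η' : X _⦋2⦌, X.FlipRel η η' →
        X.δ 2 η' = X.δ 0 η ∧ X.δ 1 η' = X.δ 1 η ∧
        X.δ 0 η' = X.σ 0 (X.δ 0 (X.δ 1 η)))) ∧
    (∀ η' : X _⦋2⦌, (∃ v : X _⦋0⦌, X.δ 0 η' = X.σ 0 v) →
      ∃! η : X _⦋2⦌, (∃ v : X _⦋0⦌, X.δ 2 η = X.σ 0 v) ∧ X.FlipRel η η') :=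
  bigon_flip_bijection_general X h₂
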